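/- Let Σ be a positive semidefinite d×d matrix, H an n×d matrix, ε > 0, and K = ΣHᵀ(HΣHᵀ + ε²I)⁻¹ the Kalman gain. Then the updated covariance (I − KH)Σ is symmetric and positive semidefinite. -/

import Mathlib

open Matrix

/-!
If the gain `K` solves the normal equation `K (H Σ Hᴴ + R) = Σ Hᴴ`, then
`(1 - K H) Σ Hᴴ = K R`, and expanding gives the Joseph form
`(1 - K H) Σ = (1 - K H) Σ (1 - K H)ᴴ + K R Kᴴ`,
a sum of two congruences of positive semidefinite matrices. For the theorem,
`R = ε² I` is positive definite, so `H Σ Hᵀ + ε² I` is invertible and the Kalman gain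
solves the normal equation.
-/

namespace Matrix

variable {m n α : Type*} [Fintype m] [Fintype n] [DecidableEq m]

theorem one_sub_mul_mul_eq_joseph_form [CommRing α] [StarRing α]
    {S : Matrix m m α} {H : Matrix n m α} {R : Matrix n n α} {K : Matrix m n α}
    (hK : K * (H * S * Hᴴ + R) = S * Hᴴ) :
    (1 - K * H) * S = (1 - K * H) * S * (1 - K * H)ᴴ + K * R * Kᴴ := by
  have hcross : (1 - K * H) * S * Hᴴ = K * R := by
    rw [← sub_eq_iff_eq_add'.mpr (hK.symm.trans (Matrix.mul_add _ _ _))]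
    simp only [Matrix.sub_mul, Matrix.one_mul, Matrix.mul_assoc]
  calc (1 - K * H) * S = (1 - K * H) * S - (1 - K * H) * S * Hᴴ * Kᴴ + K * R * Kᴴ := by
        rw [hcross, sub_add_cancel]
    _ = (1 - K * H) * S * (1 - K * H)ᴴ + K * R * Kᴴ := by
        rw [conjTranspose_sub, conjTranspose_one, conjTranspose_mul, Matrix.mul_sub,
          Matrix.mul_one, Matrix.mul_assoc _ Hᴴ]

theorem PosSemidef.one_sub_mul_mul [CommRing α] [PartialOrder α] [StarRing α] [StarOrderedRing α]
    {S : Matrix m m α} (hS : S.PosSemidef) {H : Matrix n m α} {R : Matrix n n α}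
    (hR : R.PosSemidef) {K : Matrix m n α} (hK : K * (H * S * Hᴴ + R) = S * Hᴴ) :
    ((1 - K * H) * S).PosSemidef := by
  rw [one_sub_mul_mul_eq_joseph_form hK]
  exact (hS.mul_mul_conjTranspose_same _).add (hR.mul_mul_conjTranspose_same K)

end Matrix

/-- The Kalman-updated covariance `(I − KH)Σ`, with Kalman gain
`K = ΣHᵀ(HΣHᵀ + ε²I)⁻¹`, is symmetric positive semidefinite whenever `Σ` is
positive semidefinite and `ε > 0`. -/
theorem kalman_update_posSemidef
    {d n : ℕ} (S : Matrix (Fin d) (Fin d) ℝ) (hS : S.PosSemidef)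
    (H : Matrix (Fin n) (Fin d) ℝ) (ε : ℝ) (hε : 0 < ε)
    (K : Matrix (Fin d) (Fin n) ℝ)
    (hK : K = S * Hᵀ * (H * S * Hᵀ + (ε ^ 2) • (1 : Matrix (Fin n) (Fin n) ℝ))⁻¹) :
    ((1 - K * H) * S).PosSemidef := by
  rw [← conjTranspose_eq_transpose_of_trivial] at hK
  have hR : ((ε ^ 2) • (1 : Matrix (Fin n) (Fin n) ℝ)).PosDef := PosDef.one.smul (by positivity)
  have hinnov : (H * S * Hᴴ + (ε ^ 2) • (1 : Matrix (Fin n) (Fin n) ℝ)).PosDef :=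
    PosDef.posSemidef_add (hS.mul_mul_conjTranspose_same H) hR
  refine hS.one_sub_mul_mul hR.posSemidef ?_
  rw [hK]
  exact nonsing_inv_mul_cancel_right _ _ ((isUnit_iff_isUnit_det _).mp hinnov.isUnit)
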